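/- Let F ⊊ 2^[n] be a k-antichain saturated family with skipless chain decomposition C^1, ..., C^{k-1}, and let F_t denote the sets of size t in F. Let D(F_t) be the set of (t-1)-sets A ∈ F_{t-1} such that the chain containing A also contains an element of F_t. Then |D(F_t)| = ν(F_t) for all t ∈ [n], where ν(F_t) is the maximum matching number between F_t and its shadow. -/

import Mathlib

/-- A family of finsets that is a chain under inclusion. -/
def IsChainF (C : Finset (Finset ℕ)) : Prop :=
  ∀ A ∈ C, ∀ B ∈ C, A ⊆ B ∨ B ⊆ A

/-- A skipless chain: a chain in which every cardinality between those of two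
members is attained by some member. -/
def SkiplessChain (C : Finset (Finset ℕ)) : Prop :=
  IsChainF C ∧ ∀ A ∈ C, ∀ B ∈ C, ∀ k : ℕ, A.card ≤ k → k ≤ B.card → ∃ D ∈ C, D.card = k

/-- The maximum size of a matching between a family `𝒜` and its shadow in the
containment bipartite graph. -/
noncomputable def nu (𝒜 : Finset (Finset ℕ)) : ℕ :=
  sSup {m | ∃ s ⊆ 𝒜, s.card = m ∧ ∃ f : Finset ℕ → Finset ℕ,
    Set.InjOn f ↑s ∧ ∀ a ∈ s, f a ∈ Finset.shadow 𝒜 ∧ f a ⊆ a}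

/-- The initial segment of the colexicographic order on `t`-element subsets of ℕ
of size `m`. -/
def colexSeg (m t : ℕ) : Finset (Finset ℕ) :=
  ((Finset.range (t + m)).powerset).filter (fun S => S.card = t ∧
    (((Finset.range (t + m)).powerset).filter
      (fun B => B.card = t ∧ toColex B < toColex S)).card < m)

/-- `F` is a `k`-antichain saturated family of subsets of `[n] = {0, …, n-1}`. -/
def AntichainSat (n k : ℕ) (F : Finset (Finset ℕ)) : Prop :=
  (∀ X ∈ F, X ⊆ Finset.range n) ∧
  (¬ ∃ 𝒜 ⊆ F, 𝒜.card = k ∧ IsAntichain (· ⊆ ·) (𝒜 : Set (Finset ℕ))) ∧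
  (∀ X : Finset ℕ, X ⊆ Finset.range n → X ∉ F →
    ∃ 𝒜 ⊆ insert X F, 𝒜.card = k ∧ IsAntichain (· ⊆ ·) (𝒜 : Set (Finset ℕ)))

/-- The antichain saturation number `sat*(n, k)`. -/
noncomputable def satStar (n k : ℕ) : ℕ :=
  sInf {m | ∃ F : Finset (Finset ℕ), AntichainSat n k F ∧ F.card = m}

noncomputable def cAux (k ℓ : ℕ) : ℕ → ℕ
  | 0 => k - 1
  | d + 1 => nu (colexSeg (cAux k ℓ d) (ℓ / 2 - d))

/-- The sequence `c_t` from the paper: `c_t = k - 1` for `t ≥ ⌊ℓ/2⌋` and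
`c_t = ν(C(c_{t+1}, t+1))` for `t < ⌊ℓ/2⌋`. -/
noncomputable def cseq (k ℓ t : ℕ) : ℕ :=
  if ℓ / 2 ≤ t then k - 1 else cAux k ℓ (ℓ / 2 - t)

/-!
Each chain meets a level at most once, so `D(F_t)` is in bijection with the chains meeting
levels `t - 1` and `t`; matching the two sets of each such chain gives `|D(F_t)| ≤ ν(F_t)`.

Conversely, let `f` match `s ⊆ F_t` into the shadow. If some `a ∈ s` is the bottom of its chain,
saturation forces `f a ∈ F`, and the chain through `f a` reaches level `t`: otherwise it could be
merged with the chain of `a`, and `F` would be covered by `k - 2` chains although it contains an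
antichain of size `k - 1`. Grafting the part of that chain up to `f a` below `a` gives another
skipless decomposition in which `a` and `f a` share a chain, no pair `x, f x` sharing a chain is
separated (by injectivity of `f`), and `D(F_t)` does not grow; so the number of such pairs grows.
Once no member of `s` is the bottom of its chain, distinct members of `s` lie in distinct chains
through level `t - 1`, so `|s| ≤ |D(F_t)|`.
-/

open Finset

section Chains

variable {c c₁ c₂ : Finset (Finset ℕ)} {X Y : Finset ℕ}

theorem IsChainF.subset_of_card_le (hc : IsChainF c) (hX : X ∈ c) (hY : Y ∈ c)
    (h : X.card ≤ Y.card) : X ⊆ Y :=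
  (hc X hX Y hY).elim id fun hYX => (eq_of_subset_of_card_le hYX h).ge

theorem IsChainF.eq_of_card_eq (hc : IsChainF c) (hX : X ∈ c) (hY : Y ∈ c)
    (h : X.card = Y.card) : X = Y :=
  (hc.subset_of_card_le hX hY h.le).antisymm (hc.subset_of_card_le hY hX h.ge)

theorem IsChainF.union (h₁ : IsChainF c₁) (h₂ : IsChainF c₂)
    (h : ∀ X ∈ c₁, ∀ Y ∈ c₂, X ⊆ Y) : IsChainF (c₁ ∪ c₂) := by
  intro U hU V hV
  rcases mem_union.1 hU with hU | hU <;> rcases mem_union.1 hV with hV | hV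
  exacts [h₁ U hU V hV, .inl (h U hU V hV), .inr (h V hV U hU), h₂ U hU V hV]

theorem SkiplessChain.filter {P : Finset ℕ → Prop} [DecidablePred P] (hc : SkiplessChain c)
    (hP : ∀ X ∈ c, ∀ Y ∈ c, ∀ D ∈ c, P X → P Y → X ⊆ D → D ⊆ Y → P D) :
    SkiplessChain (c.filter P) := by
  refine ⟨fun X hX Y hY => hc.1 X (mem_filter.1 hX).1 Y (mem_filter.1 hY).1, ?_⟩
  intro X hX Y hY m hXm hmY
  rw [mem_filter] at hX hY
  obtain ⟨D, hD, rfl⟩ := hc.2 X hX.1 Y hY.1 m hXm hmY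
  have hXD := hc.1.subset_of_card_le hX.1 hD hXm
  have hDY := hc.1.subset_of_card_le hD hY.1 hmY
  exact ⟨D, mem_filter.2 ⟨hD, hP X hX.1 Y hY.1 D hD hX.2 hY.2 hXD hDY⟩, rfl⟩

theorem SkiplessChain.union (h₁ : SkiplessChain c₁) (h₂ : SkiplessChain c₂)
    (h : ∀ X ∈ c₁, ∀ Y ∈ c₂, X ⊆ Y) (hX : X ∈ c₁) (hY : Y ∈ c₂) (hXY : X.card + 1 = Y.card) :
    SkiplessChain (c₁ ∪ c₂) := by
  refine ⟨h₁.1.union h₂.1 h, fun U hU V hV m hUm hmV => ?_⟩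
  rcases mem_union.1 hU with hU | hU <;> rcases mem_union.1 hV with hV | hV
  · obtain ⟨D, hD, hDm⟩ := h₁.2 U hU V hV m hUm hmV
    exact ⟨D, mem_union_left _ hD, hDm⟩
  · by_cases hm : m ≤ X.card
    · obtain ⟨D, hD, hDm⟩ := h₁.2 U hU X hX m hUm hm
      exact ⟨D, mem_union_left _ hD, hDm⟩
    · obtain ⟨D, hD, hDm⟩ := h₂.2 Y hY V hV m (by omega) hmV
      exact ⟨D, mem_union_right _ hD, hDm⟩
  · have := card_le_card (h V hV U hU)
    exact ⟨U, mem_union_right _ hU, by omega⟩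
  · obtain ⟨D, hD, hDm⟩ := h₂.2 U hU V hV m hUm hmV
    exact ⟨D, mem_union_right _ hD, hDm⟩

theorem SkiplessChain.lt_card_iff_of_forall_card_ne (hc : SkiplessChain c) (hX : X ∈ c)
    (hY : Y ∈ c) {m : ℕ} (hm : ∀ D ∈ c, D.card ≠ m) : m < X.card ↔ m < Y.card := by
  have hgap : ∀ U ∈ c, ∀ V ∈ c, U.card ≤ m → m ≤ V.card → False := fun U hU V hV h₁ h₂ =>
    let ⟨D, hD, hDm⟩ := hc.2 U hU V hV m h₁ h₂
    hm D hD hDm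
  constructor <;> intro h <;> by_contra! h'
  exacts [hgap Y hY X hX h' h.le, hgap X hX Y hY h' h.le]

theorem SkiplessChain.subset_of_forall_card_ne_of_card_eq_succ {r : ℕ} (hc : SkiplessChain c)
    (hX : X ∈ c) (hXr : X.card = r + 1) (hm : ∀ D ∈ c, D.card ≠ r) (hY : Y ∈ c) : X ⊆ Y :=
  hc.1.subset_of_card_le hX hY <| by
    have := (hc.lt_card_iff_of_forall_card_ne hY hX hm).2 (by omega)
    omega

theorem SkiplessChain.subset_of_forall_card_ne_succ_of_card_eq {r : ℕ} (hc : SkiplessChain c)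
    (hX : X ∈ c) (hXr : X.card = r) (hm : ∀ D ∈ c, D.card ≠ r + 1) (hY : Y ∈ c) : Y ⊆ X :=
  hc.1.subset_of_card_le hY hX <| by
    have := (hc.lt_card_iff_of_forall_card_ne hY hX hm).not.2 (by omega)
    have := hm Y hY
    omega

end Chains

theorem IsAntichain.card_le_card_of_cover {ι : Type*} {𝒜 : Finset (Finset ℕ)}
    (h𝒜 : IsAntichain (· ⊆ ·) (𝒜 : Set (Finset ℕ))) (S : Finset ι)
    (D : ι → Finset (Finset ℕ)) (hD : ∀ j ∈ S, IsChainF (D j))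
    (hcov : ∀ Y ∈ 𝒜, ∃ j ∈ S, Y ∈ D j) : 𝒜.card ≤ S.card := by
  refine card_le_card_of_forall_subsingleton (fun Y j => Y ∈ D j) hcov fun j hj Y hY Z hZ => ?_
  rcases hD j hj Y hY.2 Z hZ.2 with h | h
  exacts [h𝒜.eq hY.1 hZ.1 h, (h𝒜.eq hZ.1 hY.1 h).symm]

structure IsSkiplessDecomp (F : Finset (Finset ℕ)) (K : ℕ) (C : ℕ → Finset (Finset ℕ)) :
    Prop where
  skipless : ∀ i < K, SkiplessChain (C i)
  disjoint : ∀ i < K, ∀ j < K, i ≠ j → Disjoint (C i) (C j)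
  mem_iff : ∀ X, X ∈ F ↔ ∃ i < K, X ∈ C i

def SameChain (K : ℕ) (C : ℕ → Finset (Finset ℕ)) (X Y : Finset ℕ) : Prop :=
  ∃ j < K, X ∈ C j ∧ Y ∈ C j

theorem SameChain.symm {K : ℕ} {C : ℕ → Finset (Finset ℕ)} {X Y : Finset ℕ}
    (h : SameChain K C X Y) : SameChain K C Y X :=
  let ⟨j, hj, hX, hY⟩ := h
  ⟨j, hj, hY, hX⟩

namespace IsSkiplessDecomp

variable {F : Finset (Finset ℕ)} {K : ℕ} {C : ℕ → Finset (Finset ℕ)} {i j : ℕ}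
  {X Y Z : Finset ℕ}

theorem mem (hC : IsSkiplessDecomp F K C) (hi : i < K) (hX : X ∈ C i) : X ∈ F :=
  (hC.mem_iff X).2 ⟨i, hi, hX⟩

theorem mem_of_sameChain (hC : IsSkiplessDecomp F K C) (h : SameChain K C X Y) : Y ∈ F :=
  let ⟨_, hj, _, hY⟩ := h
  hC.mem hj hY

theorem index_eq (hC : IsSkiplessDecomp F K C) (hi : i < K) (hj : j < K) (hXi : X ∈ C i)
    (hXj : X ∈ C j) : i = j := by
  by_contra h
  exact disjoint_left.1 (hC.disjoint i hi j hj h) hXi hXj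

theorem subset_of_sameChain (hC : IsSkiplessDecomp F K C) (h : SameChain K C X Y)
    (hXY : X.card ≤ Y.card) : X ⊆ Y :=
  let ⟨j, hj, hX, hY⟩ := h
  (hC.skipless j hj).1.subset_of_card_le hX hY hXY

theorem eq_of_sameChain (hC : IsSkiplessDecomp F K C) (hXZ : SameChain K C X Z)
    (hYZ : SameChain K C Y Z) (hXY : X.card = Y.card) : X = Y := by
  obtain ⟨j, hj, hX, hZ⟩ := hXZ
  obtain ⟨j', hj', hY, hZ'⟩ := hYZ
  obtain rfl := hC.index_eq hj hj' hZ hZ'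
  exact (hC.skipless j hj).1.eq_of_card_eq hX hY hXY

end IsSkiplessDecomp

namespace AntichainSat

variable {n k : ℕ} {F : Finset (Finset ℕ)} {C : ℕ → Finset (Finset ℕ)} {i c : ℕ}
  {X a A : Finset ℕ}

theorem exists_antichain_incomparable (hsat : AntichainSat n k F) (hX : X ⊆ range n)
    (hXF : X ∉ F) :
    ∃ 𝒜 ⊆ F, 𝒜.card = k - 1 ∧ IsAntichain (· ⊆ ·) (𝒜 : Set (Finset ℕ)) ∧
      ∀ Y ∈ 𝒜, ¬ X ⊆ Y ∧ ¬ Y ⊆ X := by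
  obtain ⟨𝒜, h𝒜F, h𝒜k, h𝒜⟩ := hsat.2.2 X hX hXF
  have hX𝒜 : X ∈ 𝒜 := by
    by_contra hX𝒜
    exact hsat.2.1 ⟨𝒜, fun Y hY => (mem_insert.1 (h𝒜F hY)).resolve_left
      (ne_of_mem_of_not_mem hY hX𝒜), h𝒜k, h𝒜⟩
  refine ⟨𝒜.erase X, subset_insert_iff.1 h𝒜F, by rw [card_erase_of_mem hX𝒜, h𝒜k],
    h𝒜.subset (coe_subset.2 (erase_subset X 𝒜)), fun Y hY => ?_⟩
  obtain ⟨hYX, hY⟩ := mem_erase.1 hY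
  exact ⟨h𝒜 hX𝒜 hY hYX.symm, h𝒜 hY hX𝒜 hYX⟩

theorem le_card_of_cover {ι : Type*} (hsat : AntichainSat n k F)
    (hF : ∃ X ⊆ range n, X ∉ F) (S : Finset ι) (D : ι → Finset (Finset ℕ))
    (hD : ∀ j ∈ S, IsChainF (D j)) (hcov : ∀ Y ∈ F, ∃ j ∈ S, Y ∈ D j) : k - 1 ≤ S.card := by
  obtain ⟨X, hX, hXF⟩ := hF
  obtain ⟨𝒜, h𝒜F, h𝒜k, h𝒜, -⟩ := hsat.exists_antichain_incomparable hX hXF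
  exact h𝒜k ▸ h𝒜.card_le_card_of_cover S D hD fun Y hY => hcov Y (h𝒜F hY)

theorem not_isChainF_union (hsat : AntichainSat n k F) (hF : ∃ X ⊆ range n, X ∉ F)
    (hC : IsSkiplessDecomp F (k - 1) C) (hi : i < k - 1) (hc : c < k - 1) (hic : i ≠ c) :
    ¬ IsChainF (C c ∪ C i) := by
  intro hchain
  have hcover := hsat.le_card_of_cover hF ((range (k - 1)).erase c)
    (Function.update C i (C c ∪ C i)) (fun j hj => ?_) fun Y hY => ?_
  · rw [card_erase_of_mem (mem_range.2 hc), card_range] at hcover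
    omega
  · rcases eq_or_ne j i with rfl | hji
    · simpa using hchain
    · simpa [hji] using (hC.skipless j (mem_range.1 (mem_of_mem_erase hj))).1
  · obtain ⟨j, hj, hYj⟩ := (hC.mem_iff Y).1 hY
    have hi' : i ∈ (range (k - 1)).erase c := mem_erase.2 ⟨hic, mem_range.2 hi⟩
    rcases eq_or_ne j c with rfl | hjc
    · exact ⟨i, hi', by simp [hYj]⟩
    rcases eq_or_ne j i with rfl | hji
    · exact ⟨j, hi', by simp [hYj]⟩
    exact ⟨j, mem_erase.2 ⟨hjc, mem_range.2 hj⟩, by simp [hji, hYj]⟩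

/-- A missing `A` would complete an antichain of size `k - 1` in `F` avoiding the chain of `a`,
and the remaining `k - 2` chains cannot carry it. -/
theorem mem_of_subset_of_forall_subset (hsat : AntichainSat n k F)
    (hC : IsSkiplessDecomp F (k - 1) C) (hi : i < k - 1) (ha : a ∈ C i)
    (hmin : ∀ X ∈ C i, a ⊆ X) (hAa : A ⊆ a) : A ∈ F := by
  by_contra hAF
  obtain ⟨𝒜, h𝒜F, h𝒜k, h𝒜, hinc⟩ :=
    hsat.exists_antichain_incomparable (hAa.trans (hsat.1 a (hC.mem hi ha))) hAF
  have hcover := h𝒜.card_le_card_of_cover ((range (k - 1)).erase i) C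
    (fun j hj => (hC.skipless j (mem_range.1 (mem_of_mem_erase hj))).1) fun Y hY => ?_
  · rw [card_erase_of_mem (mem_range.2 hi), card_range] at hcover
    omega
  · obtain ⟨j, hj, hYj⟩ := (hC.mem_iff Y).1 (h𝒜F hY)
    refine ⟨j, mem_erase.2 ⟨?_, mem_range.2 hj⟩, hYj⟩
    rintro rfl
    exact (hinc Y hY).1 (hAa.trans (hmin Y hYj))

end AntichainSat

theorem nu_le {𝒜 : Finset (Finset ℕ)} {m : ℕ}
    (h : ∀ s ⊆ 𝒜, ∀ f : Finset ℕ → Finset ℕ, Set.InjOn f s →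
      (∀ a ∈ s, f a ∈ 𝒜.shadow ∧ f a ⊆ a) → s.card ≤ m) : nu 𝒜 ≤ m :=
  csSup_le ⟨0, ∅, empty_subset _, rfl, id, by simp, by simp⟩
    fun _ ⟨s, hs, hsm, f, hf, hfs⟩ => hsm ▸ h s hs f hf hfs

theorem card_le_nu {𝒜 𝒮 : Finset (Finset ℕ)} {g : Finset ℕ → Finset ℕ}
    (hg : Set.InjOn g 𝒮) (h : ∀ A ∈ 𝒮, g A ∈ 𝒜 ∧ A ⊆ g A ∧ (g A).card = A.card + 1) :
    𝒮.card ≤ nu 𝒜 := by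
  have hinv := hg.leftInvOn_invFunOn
  refine le_csSup ⟨𝒜.card, fun _ ⟨s, hs, hsm, _⟩ => hsm ▸ card_le_card hs⟩
    ⟨𝒮.image g, fun _ hB => ?_, card_image_of_injOn hg, Function.invFunOn g 𝒮, ?_, ?_⟩
  · obtain ⟨A, hA, rfl⟩ := mem_image.1 hB
    exact (h A hA).1
  · rw [coe_image]
    rintro _ ⟨A, hA, rfl⟩ _ ⟨A', hA', rfl⟩ hAA'
    rw [hinv hA, hinv hA'] at hAA'
    rw [hAA']
  · intro B hB
    obtain ⟨A, hA, rfl⟩ := mem_image.1 hB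
    obtain ⟨hgA, hAg, hcard⟩ := h A hA
    rw [hinv (mem_coe.2 hA), mem_shadow_iff_exists_sdiff]
    exact ⟨⟨g A, hgA, hAg, by rw [card_sdiff_of_subset hAg]; omega⟩, hAg⟩

def graft (C : ℕ → Finset (Finset ℕ)) (c i : ℕ) (A : Finset ℕ) : ℕ → Finset (Finset ℕ) :=
  Function.update (Function.update C c ((C c).filter (¬ · ⊆ A))) i
    ((C c).filter (· ⊆ A) ∪ C i)

section Graft

variable {F : Finset (Finset ℕ)} {K : ℕ} {C : ℕ → Finset (Finset ℕ)} {c i j : ℕ}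
  {a A X Y : Finset ℕ}

theorem graft_apply : graft C c i A j =
    if j = i then (C c).filter (· ⊆ A) ∪ C i
    else if j = c then (C c).filter (¬ · ⊆ A) else C j := by
  simp only [graft, Function.update_apply]

theorem mem_graft : X ∈ graft C c i A j ↔
    if j = i then (X ∈ C c ∧ X ⊆ A) ∨ X ∈ C i
    else if j = c then X ∈ C c ∧ ¬ X ⊆ A else X ∈ C j := by
  rw [graft_apply]
  split_ifs <;> simp

theorem IsSkiplessDecomp.graft (hC : IsSkiplessDecomp F K C) (hi : i < K) (hc : c < K)
    (hic : i ≠ c) (ha : a ∈ C i) (hmin : ∀ X ∈ C i, a ⊆ X) (hA : A ∈ C c) (hAa : A ⊆ a)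
    (hcard : A.card + 1 = a.card) : IsSkiplessDecomp F K (graft C c i A) where
  skipless j hj := by
    have hlower := (hC.skipless c hc).filter (P := (· ⊆ A))
      fun _ _ _ _ _ _ _ hY _ hDY => hDY.trans hY
    have hupper := (hC.skipless c hc).filter (P := (¬ · ⊆ A))
      fun _ _ _ _ _ _ hX _ hXD _ hDA => hX (hXD.trans hDA)
    rw [graft_apply]
    split_ifs with hji hjc
    · exact hlower.union (hC.skipless i hi)
        (fun X hX Y hY => (mem_filter.1 hX).2.trans (hAa.trans (hmin Y hY)))
        (mem_filter.2 ⟨hA, subset_rfl⟩) ha hcard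
    · exact hupper
    · exact hC.skipless j hj
  disjoint j hj j' hj' hjj' := by
    rw [disjoint_left]
    intro X hX hX'
    rw [mem_graft] at hX hX'
    have hunique : ∀ p < K, ∀ q < K, X ∈ C p → X ∈ C q → p = q :=
      fun p hp q hq => hC.index_eq hp hq
    split_ifs at hX hX' <;> grind
  mem_iff X := by
    rw [hC.mem_iff]
    simp only [mem_graft]
    grind

theorem SameChain.graft_of_not_mem (hX : X ∉ C c) (h : SameChain K C X Y) :
    SameChain K (graft C c i A) X Y := by
  obtain ⟨j, hj, hXj, hYj⟩ := h
  have hjc : j ≠ c := by rintro rfl; exact hX hXj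
  refine ⟨j, hj, ?_, ?_⟩ <;> rw [mem_graft] <;> split_ifs <;> simp_all

theorem SameChain.of_graft (h : SameChain K (graft C c i A) X Y) :
    SameChain K C X Y ∨ (X ∈ C c ∧ X ⊆ A) ∨ (Y ∈ C c ∧ Y ⊆ A) := by
  obtain ⟨j, hj, hXj, hYj⟩ := h
  rw [mem_graft] at hXj hYj
  unfold SameChain
  split_ifs at hXj hYj with hji hjc
  · subst hji
    grind
  · exact .inl ⟨c, hjc ▸ hj, hXj.1, hYj.1⟩
  · exact .inl ⟨j, hj, hXj, hYj⟩

end Graft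

section Matching

open scoped Classical

/-- The paper's `D(F_{r+1})`. -/
noncomputable def continuingSets (F : Finset (Finset ℕ)) (K : ℕ) (C : ℕ → Finset (Finset ℕ))
    (r : ℕ) : Finset (Finset ℕ) :=
  F.filter fun A => A.card = r ∧ ∃ B, B.card = r + 1 ∧ SameChain K C A B

variable {n k r : ℕ} {F s : Finset (Finset ℕ)} {K : ℕ} {C : ℕ → Finset (Finset ℕ)}
  {f : Finset ℕ → Finset ℕ}

theorem mem_continuingSets {A : Finset ℕ} : A ∈ continuingSets F K C r ↔
    A ∈ F ∧ A.card = r ∧ ∃ B, B.card = r + 1 ∧ SameChain K C A B :=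
  mem_filter

theorem continuingSets_graft_subset {c i : ℕ} {A b : Finset ℕ} (hc : c < K) (hA : A ∈ C c)
    (hAr : A.card = r) (hb : b ∈ C c) (hbr : b.card = r + 1) :
    continuingSets F K (graft C c i A) r ⊆ continuingSets F K C r := by
  intro B hB
  obtain ⟨hBF, hBr, E, hEr, hBE⟩ := mem_continuingSets.1 hB
  refine mem_continuingSets.2 ⟨hBF, hBr, ?_⟩
  rcases SameChain.of_graft hBE with hBE | ⟨hBc, hBA⟩ | ⟨-, hEA⟩
  · exact ⟨E, hEr, hBE⟩
  · obtain rfl := eq_of_subset_of_card_le hBA (by omega)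
    exact ⟨b, hbr, c, hc, hBc, hb⟩
  · have := card_le_card hEA
    omega

theorem card_continuingSets_le_nu (hC : IsSkiplessDecomp F K C) :
    (continuingSets F K C r).card ≤ nu (F.filter fun B => B.card = r + 1) := by
  have hup : ∀ A ∈ continuingSets F K C r, ∃ B, B.card = r + 1 ∧ SameChain K C A B :=
    fun A hA => (mem_continuingSets.1 hA).2.2
  choose! g hgr hg using hup
  refine card_le_nu (g := g) (fun A hA A' hA' hAA' => ?_) fun A hA => ?_
  · exact hC.eq_of_sameChain (hg A hA) (hAA' ▸ hg A' hA')
      (by rw [(mem_continuingSets.1 hA).2.1, (mem_continuingSets.1 hA').2.1])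
  · have hAr := (mem_continuingSets.1 hA).2.1
    have hgr := hgr A hA
    exact ⟨mem_filter.2 ⟨hC.mem_of_sameChain (hg A hA), hgr⟩,
      hC.subset_of_sameChain (hg A hA) (by omega), by omega⟩

theorem card_le_card_continuingSets_of_forall (hC : IsSkiplessDecomp F K C)
    (hs : ∀ x ∈ s, x.card = r + 1 ∧ ∃ A, A.card = r ∧ SameChain K C x A) :
    s.card ≤ (continuingSets F K C r).card := by
  refine card_le_card_of_forall_subsingleton (fun x A => SameChain K C x A) (fun x hx => ?_)
    fun A hA x hx y hy => ?_
  · obtain ⟨hxr, A, hAr, hxA⟩ := hs x hx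
    exact ⟨A, mem_continuingSets.2 ⟨hC.mem_of_sameChain hxA, hAr, x, hxr, hxA.symm⟩, hxA⟩
  · exact hC.eq_of_sameChain hx.2 hy.2 (by rw [(hs x hx.1).1, (hs y hy.1).1])

variable (hsat : AntichainSat n k F) (hF : ∃ X ⊆ range n, X ∉ F)
  (hs : ∀ x ∈ s, x ∈ F ∧ x.card = r + 1) (hf : ∀ x ∈ s, f x ⊆ x ∧ (f x).card = r)
  (hinj : Set.InjOn f s)
include hsat hF hs hf hinj

theorem exists_graft_of_forall_not_sameChain (hC : IsSkiplessDecomp F (k - 1) C) {a : Finset ℕ}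
    (ha : a ∈ s) (hbad : ∀ A, A.card = r → ¬ SameChain (k - 1) C a A) :
    ∃ C', IsSkiplessDecomp F (k - 1) C' ∧
      continuingSets F (k - 1) C' r ⊆ continuingSets F (k - 1) C r ∧
      (s.filter fun x => ¬ SameChain (k - 1) C' x (f x)).card <
        (s.filter fun x => ¬ SameChain (k - 1) C x (f x)).card := by
  obtain ⟨haF, har⟩ := hs a ha
  obtain ⟨hfa, hfar⟩ := hf a ha
  obtain ⟨i, hi, hai⟩ := (hC.mem_iff a).1 haF
  have hmin : ∀ X ∈ C i, a ⊆ X := fun X hX =>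
    (hC.skipless i hi).subset_of_forall_card_ne_of_card_eq_succ hai har
      (fun D hD hDr => hbad D hDr ⟨i, hi, hai, hD⟩) hX
  obtain ⟨c, hc, hAc⟩ := (hC.mem_iff _).1 (hsat.mem_of_subset_of_forall_subset hC hi hai hmin hfa)
  have hic : i ≠ c := by
    rintro rfl
    exact hbad _ hfar ⟨i, hi, hai, hAc⟩
  obtain ⟨b, hbc, hbr⟩ : ∃ b ∈ C c, b.card = r + 1 := by
    by_contra! hnone
    refine hsat.not_isChainF_union hF hC hi hc hic
      ((hC.skipless c hc).1.union (hC.skipless i hi).1 fun X hX Y hY => ?_)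
    exact ((hC.skipless c hc).subset_of_forall_card_ne_succ_of_card_eq hAc hfar hnone hX).trans
      (hfa.trans (hmin Y hY))
  refine ⟨graft C c i (f a), hC.graft hi hc hic hai hmin hAc hfa (by omega),
    continuingSets_graft_subset hc hAc hfar hbc hbr, card_lt_card ?_⟩
  have ha' : SameChain (k - 1) (graft C c i (f a)) a (f a) :=
    ⟨i, hi, by simp [graft_apply, hai], by simp [graft_apply, hAc]⟩
  refine (ssubset_iff_of_subset fun x hx => ?_).2
    ⟨a, mem_filter.2 ⟨ha, hbad _ hfar⟩, fun h => (mem_filter.1 h).2 ha'⟩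
  obtain ⟨hx, hxbad⟩ := mem_filter.1 hx
  refine mem_filter.2 ⟨hx, fun hxf => hxbad (hxf.graft_of_not_mem fun hxc => ?_)⟩
  have hfxA : f x = f a :=
    hC.eq_of_sameChain hxf.symm ⟨c, hc, hAc, hxc⟩ (by rw [(hf x hx).2, hfar])
  obtain rfl := hinj hx ha hfxA
  exact hic (hC.index_eq hi hc hai hxc)

theorem card_le_card_continuingSets (hC : IsSkiplessDecomp F (k - 1) C) :
    s.card ≤ (continuingSets F (k - 1) C r).card := by
  induction hm : (s.filter fun x => ¬ SameChain (k - 1) C x (f x)).card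
    using Nat.strong_induction_on generalizing C with
  | _ m ih =>
  by_cases hgood : ∀ x ∈ s, ∃ A, A.card = r ∧ SameChain (k - 1) C x A
  · exact card_le_card_continuingSets_of_forall hC fun x hx => ⟨(hs x hx).2, hgood x hx⟩
  · push Not at hgood
    obtain ⟨a, ha, hbad⟩ := hgood
    obtain ⟨C', hC', hsub, hlt⟩ :=
      exists_graft_of_forall_not_sameChain hsat hF hs hf hinj hC ha hbad
    exact (ih _ (hm ▸ hlt) hC' rfl).trans (card_le_card hsub)

end Matching

open Classical in
/-- In a skipless chain decomposition of a `k`-antichain saturated family, the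
number of `(t-1)`-sets whose chain continues to layer `t` equals `ν(F_t)`. -/
theorem stmt16 (n k : ℕ) (F : Finset (Finset ℕ))
    (hFne : F ≠ (Finset.range n).powerset) (hsat : AntichainSat n k F)
    (C : ℕ → Finset (Finset ℕ))
    (hCsk : ∀ i < k - 1, SkiplessChain (C i))
    (hCdisj : ∀ i < k - 1, ∀ j < k - 1, i ≠ j → Disjoint (C i) (C j))
    (hCdecomp : ∀ X : Finset ℕ, X ∈ F ↔ ∃ i < k - 1, X ∈ C i) :
    ∀ t : ℕ, 1 ≤ t → t ≤ n →
      (F.filter (fun A => A.card = t - 1 ∧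
        ∃ i < k - 1, A ∈ C i ∧ ∃ B ∈ C i, B.card = t ∧ B ∈ F)).card =
      nu (F.filter (fun A => A.card = t)) := by
  intro t ht _
  obtain ⟨r, rfl⟩ : ∃ r, t = r + 1 := ⟨t - 1, by omega⟩
  have hC : IsSkiplessDecomp F (k - 1) C := ⟨hCsk, hCdisj, hCdecomp⟩
  have hF : ∃ X ⊆ range n, X ∉ F := by
    by_contra! h
    exact hFne (Subset.antisymm (fun X hX => mem_powerset.2 (hsat.1 X hX))
      fun X hX => h X (mem_powerset.1 hX))
  have hD : F.filter (fun A => A.card = r + 1 - 1 ∧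
      ∃ i < k - 1, A ∈ C i ∧ ∃ B ∈ C i, B.card = r + 1 ∧ B ∈ F) =
      continuingSets F (k - 1) C r :=
    filter_congr fun A _ => by
      simp only [Nat.add_sub_cancel, SameChain]
      grind [hC.mem]
  rw [hD]
  refine le_antisymm (card_continuingSets_le_nu hC) (nu_le fun s hs f hinj hf => ?_)
  have hsized := Set.Sized.shadow (𝒜 := F.filter fun A => A.card = r + 1) (r := r + 1)
    fun A hA => (mem_filter.1 hA).2
  exact card_le_card_continuingSets hsat hF (fun x hx => mem_filter.1 (hs hx))
    (fun x hx => ⟨(hf x hx).2, hsized (hf x hx).1⟩) hinj hC
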